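/- Let p ∈ [0,1/2] and let (x₁,y₁,z₁), (x₂,y₂,z₂), (x₃,y₃,z₃) be real triples each satisfying x_i² + y_i² + z_i² = 1. Then z₂ + z₃ + z₁(z₂ − z₃) + (1−2p)·( x₁(x₂ − x₃) + y₁(y₂ − y₃) ) ≤ 2·√(1 + (1−2p)²). -/
import Mathlib

set_option maxHeartbeats 1000000

private lemma cs_aux (a b c x y z : ℝ) (h : x ^ 2 + y ^ 2 + z ^ 2 = 1) :
    a * x + b * y + c * z ≤ Real.sqrt (a ^ 2 + b ^ 2 + c ^ 2) := by
  have h3 : (a * x + b * y + c * z) ^ 2 ≤ a ^ 2 + b ^ 2 + c ^ 2 := by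
    nlinarith [sq_nonneg (a * y - b * x), sq_nonneg (a * z - c * x), sq_nonneg (b * z - c * y)]
  calc a * x + b * y + c * z ≤ |a * x + b * y + c * z| := le_abs_self _
    _ = Real.sqrt ((a * x + b * y + c * z) ^ 2) := (Real.sqrt_sq_eq_abs _).symm
    _ ≤ Real.sqrt (a ^ 2 + b ^ 2 + c ^ 2) := Real.sqrt_le_sqrt h3

/-- The Bloch-vector optimization concluding the dephasing-channel bound (Appendix D):
for `p ∈ [0,1/2]` and unit vectors `(xᵢ,yᵢ,zᵢ) ∈ ℝ³`, `i = 1,2,3`,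
`z₂ + z₃ + z₁(z₂−z₃) + (1−2p)(x₁(x₂−x₃) + y₁(y₂−y₃)) ≤ 2√(1+(1−2p)²)`. -/
theorem bloch_vector_inequality
    (p : ℝ) (hp : p ∈ Set.Icc (0 : ℝ) (1 / 2))
    (x₁ y₁ z₁ x₂ y₂ z₂ x₃ y₃ z₃ : ℝ)
    (h₁ : x₁ ^ 2 + y₁ ^ 2 + z₁ ^ 2 = 1)
    (h₂ : x₂ ^ 2 + y₂ ^ 2 + z₂ ^ 2 = 1)
    (h₃ : x₃ ^ 2 + y₃ ^ 2 + z₃ ^ 2 = 1) :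
    z₂ + z₃ + z₁ * (z₂ - z₃) + (1 - 2 * p) * (x₁ * (x₂ - x₃) + y₁ * (y₂ - y₃))
      ≤ 2 * Real.sqrt (1 + (1 - 2 * p) ^ 2) := by
  obtain ⟨hp0, hp1⟩ := hp
  set g : ℝ := 1 - 2 * p with hg
  have hg0 : 0 ≤ g := by simp only [hg]; linarith
  have hg1 : g ≤ 1 := by simp only [hg]; linarith
  have hs : x₁ ^ 2 + y₁ ^ 2 = 1 - z₁ ^ 2 := by linarith
  set A : ℝ := g ^ 2 * (1 - z₁ ^ 2) + (1 + z₁) ^ 2 with hAdef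
  set B : ℝ := g ^ 2 * (1 - z₁ ^ 2) + (1 - z₁) ^ 2 with hBdef
  have eA : (g * x₁) ^ 2 + (g * y₁) ^ 2 + (1 + z₁) ^ 2 = A := by
    rw [hAdef]; linear_combination g ^ 2 * hs
  have eB : (-(g * x₁)) ^ 2 + (-(g * y₁)) ^ 2 + (1 - z₁) ^ 2 = B := by
    rw [hBdef]; linear_combination g ^ 2 * hs
  have t1 : (g * x₁) * x₂ + (g * y₁) * y₂ + (1 + z₁) * z₂ ≤ Real.sqrt A := by
    rw [← eA]; exact cs_aux _ _ _ _ _ _ h₂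
  have t2 : (-(g * x₁)) * x₃ + (-(g * y₁)) * y₃ + (1 - z₁) * z₃ ≤ Real.sqrt B := by
    rw [← eB]; exact cs_aux _ _ _ _ _ _ h₃
  have hz1 : z₁ ^ 2 ≤ 1 := by nlinarith [sq_nonneg x₁, sq_nonneg y₁]
  have hA : (0:ℝ) ≤ A := by nlinarith [sq_nonneg g, sq_nonneg (1 + z₁)]
  have hB : (0:ℝ) ≤ B := by nlinarith [sq_nonneg g, sq_nonneg (1 - z₁)]
  have hc : (0:ℝ) ≤ 1 + g ^ 2 := by positivity
  have hA2 : (Real.sqrt A) ^ 2 = A := Real.sq_sqrt hA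
  have hB2 : (Real.sqrt B) ^ 2 = B := Real.sq_sqrt hB
  have hc2 : (Real.sqrt (1 + g ^ 2)) ^ 2 = 1 + g ^ 2 := Real.sq_sqrt hc
  have key : Real.sqrt A * Real.sqrt B ≤ (1 + g ^ 2) - z₁ ^ 2 * (1 - g ^ 2) := by
    rw [← Real.sqrt_mul hA]
    have hd0 : (0:ℝ) ≤ (1 + g ^ 2) - z₁ ^ 2 * (1 - g ^ 2) := by nlinarith [sq_nonneg g, mul_nonneg (sq_nonneg z₁) (sq_nonneg g)]
    have hprod : A * B ≤ ((1 + g ^ 2) - z₁ ^ 2 * (1 - g ^ 2)) ^ 2 := by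
      rw [hAdef, hBdef]; nlinarith [sq_nonneg (z₁ * g ^ 2)]
    calc Real.sqrt (A * B) ≤ Real.sqrt (((1 + g ^ 2) - z₁ ^ 2 * (1 - g ^ 2)) ^ 2) :=
          Real.sqrt_le_sqrt hprod
      _ = (1 + g ^ 2) - z₁ ^ 2 * (1 - g ^ 2) := Real.sqrt_sq hd0
  have hsq : (Real.sqrt A + Real.sqrt B) ^ 2 ≤ (2 * Real.sqrt (1 + g ^ 2)) ^ 2 := by
    have hAB : A + B = 2 * ((1 + g ^ 2) + z₁ ^ 2 * (1 - g ^ 2)) := by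
      rw [hAdef, hBdef]; ring
    nlinarith [key, hA2, hB2, hc2]
  have hfin : Real.sqrt A + Real.sqrt B ≤ 2 * Real.sqrt (1 + g ^ 2) := by
    have h1 : (0:ℝ) ≤ Real.sqrt A + Real.sqrt B := by positivity
    have h2 : (0:ℝ) ≤ 2 * Real.sqrt (1 + g ^ 2) := by positivity
    calc Real.sqrt A + Real.sqrt B
        = Real.sqrt ((Real.sqrt A + Real.sqrt B) ^ 2) := (Real.sqrt_sq h1).symm
      _ ≤ Real.sqrt ((2 * Real.sqrt (1 + g ^ 2)) ^ 2) := Real.sqrt_le_sqrt hsq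
      _ = 2 * Real.sqrt (1 + g ^ 2) := Real.sqrt_sq h2
  calc z₂ + z₃ + z₁ * (z₂ - z₃) + g * (x₁ * (x₂ - x₃) + y₁ * (y₂ - y₃))
      = ((g * x₁) * x₂ + (g * y₁) * y₂ + (1 + z₁) * z₂)
        + ((-(g * x₁)) * x₃ + (-(g * y₁)) * y₃ + (1 - z₁) * z₃) := by ring
    _ ≤ Real.sqrt A + Real.sqrt B := add_le_add t1 t2
    _ ≤ 2 * Real.sqrt (1 + g ^ 2) := hfin
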